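/- arXiv:2411.06715 — 7 statements merged into one kernel-verified Lean document; each statement's English description precedes it below -/
import Mathlib

section
/- Let p₁,…,p_{n−1} ∈ ℤⁿ be vectors that form a ℤ-basis of V ∩ ℤⁿ where V = span_ℝ(p₁,…,p_{n−1}) is an (n−1)-dimensional subspace of ℝⁿ, and let q ∈ ℤⁿ be a primitive vector spanning the orthogonal complement V^⊥. Then the determinant of the (n−1)×(n−1) Gram matrix [⟨p_i, p_j⟩]_{i,j=1}^{n−1} equals ⟨q, q⟩. -/
/-!
Let `M` be the matrix with rows `p₁, …, pₙ, q`. Since `q ⟂ pᵢ`, the matrix `M Mᵀ` is block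
diagonal with blocks the Gram matrix and `⟨q, q⟩`, so `⟨q, q⟩ · det Gram = (det M)²`, and it
suffices to show `det M = ±⟨q, q⟩`.

By dimension count, the real span of the `pᵢ` is the hyperplane `q^⊥`, so the basis hypothesis
says that every integer vector orthogonal to `q` is an integer combination of the `pᵢ`. As `q` is
primitive, Bézout gives `w ∈ ℤⁿ⁺¹` with `⟨q, w⟩ = 1`, and every `x ∈ ℤⁿ⁺¹` splits as
`(x - ⟨q, x⟩ w) + ⟨q, x⟩ w`. Hence the rows `p₁, …, pₙ, w` generate `ℤⁿ⁺¹`, so their determinant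
is `±1`; and for `x = q` the splitting shows, by row operations, that `det M = ⟨q, q⟩` times it.
-/

open Matrix

namespace Matrix

theorem span_eq_ker_dotProductEquiv {K ι m : Type*} [Field K] [Fintype ι] [Fintype m]
    [DecidableEq m] {v : ι → m → K} (hv : LinearIndependent K v) {q : m → K} (hq : q ≠ 0)
    (horth : ∀ i, q ⬝ᵥ v i = 0) (hcard : Fintype.card ι + 1 = Fintype.card m) :
    Submodule.span K (Set.range v) = LinearMap.ker (dotProductEquiv K m q) := by
  have hf : dotProductEquiv K m q ≠ 0 := (LinearEquiv.map_ne_zero_iff _).2 hq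
  refine Submodule.eq_of_le_of_finrank_eq ?_ ?_
  · rw [Submodule.span_le]
    rintro _ ⟨i, rfl⟩
    exact horth i
  · have := Module.Dual.finrank_ker_add_one_of_ne_zero hf
    rw [finrank_span_eq_card hv]
    simp only [Module.finrank_fintype_fun_eq_card] at this
    omega

theorem of_snoc_eq_updateRow {α : Type*} {n : ℕ} (p : Fin n → Fin (n + 1) → α)
    (w x : Fin (n + 1) → α) :
    of (Fin.snoc p x) = (of (Fin.snoc p w)).updateRow (Fin.last n) x := by
  ext i j
  induction i using Fin.lastCases <;> simp [updateRow_apply, (Fin.castSucc_lt_last _).ne]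

variable {R : Type*} [CommRing R] {n : ℕ}

theorem det_eq_mul_det_submatrix_castSucc (A : Matrix (Fin (n + 1)) (Fin (n + 1)) R)
    (h : ∀ j : Fin n, A (Fin.last n) j.castSucc = 0) :
    A.det = A (Fin.last n) (Fin.last n) * (A.submatrix Fin.castSucc Fin.castSucc).det := by
  rw [det_succ_row _ (Fin.last n), Fin.sum_univ_castSucc]
  simp [h, Fin.succAbove_last]

theorem det_of_snoc_mul_transpose (p : Fin n → Fin (n + 1) → R) (q : Fin (n + 1) → R)
    (horth : ∀ i, q ⬝ᵥ p i = 0) :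
    (of (Fin.snoc p q) * (of (Fin.snoc p q))ᵀ).det =
      (q ⬝ᵥ q) * (of fun i j => p i ⬝ᵥ p j).det := by
  rw [det_eq_mul_det_submatrix_castSucc]
  · congr 2
    · simp [mul_apply, dotProduct]
    · ext
      simp [mul_apply, dotProduct]
  · intro j
    simpa [mul_apply, dotProduct] using horth j

theorem det_of_snoc_vecMul (p : Fin n → Fin (n + 1) → R) (w c : Fin (n + 1) → R) :
    (of (Fin.snoc p (c ᵥ* of (Fin.snoc p w)))).det = c (Fin.last n) * (of (Fin.snoc p w)).det := by
  rw [of_snoc_eq_updateRow p w, vecMul_eq_sum, det_updateRow_sum, smul_eq_mul]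

theorem exists_vecMul_of_snoc_eq {p : Fin n → Fin (n + 1) → R} {q w : Fin (n + 1) → R}
    (hw : q ⬝ᵥ w = 1) (hspan : ∀ x, q ⬝ᵥ x = 0 → ∃ c : Fin n → R, x = ∑ i, c i • p i)
    (x : Fin (n + 1) → R) :
    ∃ c, c ᵥ* of (Fin.snoc p w) = x ∧ c (Fin.last n) = q ⬝ᵥ x := by
  obtain ⟨d, hd⟩ := hspan (x - (q ⬝ᵥ x) • w) (by simp [dotProduct_sub, hw])
  refine ⟨Fin.snoc d (q ⬝ᵥ x), ?_, by simp⟩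
  rw [vecMul_eq_sum, Fin.sum_univ_castSucc]
  ext k
  have hdk := congrFun hd k
  simp only [Finset.sum_apply, Pi.add_apply, Pi.smul_apply, Pi.sub_apply, of_apply,
    Fin.snoc_castSucc, Fin.snoc_last] at hdk ⊢
  rw [← hdk, sub_add_cancel]

theorem associated_det_of_snoc {p : Fin n → Fin (n + 1) → R} {q w : Fin (n + 1) → R}
    (hw : q ⬝ᵥ w = 1) (hspan : ∀ x, q ⬝ᵥ x = 0 → ∃ c : Fin n → R, x = ∑ i, c i • p i) :
    Associated (q ⬝ᵥ q) (of (Fin.snoc p q)).det := by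
  have hunit : IsUnit (of (Fin.snoc p w)).det := by
    rw [← isUnit_iff_isUnit_det, ← vecMul_surjective_iff_isUnit]
    exact fun x => (exists_vecMul_of_snoc_eq hw hspan x).imp fun _ => And.left
  obtain ⟨c, hc, hclast⟩ := exists_vecMul_of_snoc_eq hw hspan q
  have hdet := det_of_snoc_vecMul p w c
  rw [hc, hclast] at hdet
  rw [hdet]
  exact ⟨hunit.unit, rfl⟩

end Matrix

/-- the determinant of the Gram matrix of a ℤ-basis of `V ∩ ℤⁿ`
equals `⟨q,q⟩` for a primitive `q` spanning `V^⊥`. Here the ambient space is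
`ℝ^(n+1)` and there are `n` vectors `p i`. -/
theorem gram_det_eq_q_norm_sq (n : ℕ)
    (p : Fin n → Fin (n + 1) → ℤ) (q : Fin (n + 1) → ℤ)
    (hLI : LinearIndependent ℝ (fun i => fun j => ((p i j : ℝ))))
    (hbasis : ∀ x : Fin (n + 1) → ℤ,
      ((fun j => (x j : ℝ)) ∈
          Submodule.span ℝ (Set.range (fun i => fun j => ((p i j : ℝ))))) →
        ∃ c : Fin n → ℤ, x = ∑ i, c i • p i)
    (hprim : Finset.univ.gcd q = 1)
    (horth : ∀ i, dotProduct q (p i) = 0) :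
    Matrix.det (Matrix.of fun i j => dotProduct (p i) (p j)) =
      dotProduct q q := by
  have hq : q ≠ 0 := by
    rintro rfl
    exact zero_ne_one ((Finset.gcd_eq_zero_iff.2 fun _ _ => rfl).symm.trans hprim)
  obtain ⟨w, hw⟩ := Finset.gcd_eq_sum_mul Finset.univ q
  rw [hprim] at hw
  have hcast : ∀ x : Fin (n + 1) → ℤ,
      ((fun j => (q j : ℝ)) ⬝ᵥ fun j => (x j : ℝ)) = ((q ⬝ᵥ x : ℤ) : ℝ) := by
    intro x
    simp [dotProduct]
  have hspan : ∀ x, q ⬝ᵥ x = 0 → ∃ c : Fin n → ℤ, x = ∑ i, c i • p i := by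
    intro x hx
    refine hbasis x ?_
    rw [span_eq_ker_dotProductEquiv hLI (q := fun j => (q j : ℝ))
      (fun h => hq (funext fun j => by simpa using congrFun h j))
      (fun i => by rw [hcast, horth, Int.cast_zero]) (by simp)]
    rw [LinearMap.mem_ker, dotProductEquiv_apply_apply, hcast, hx, Int.cast_zero]
  apply mul_left_cancel₀ (dotProduct_self_eq_zero.not.2 hq)
  rw [← det_of_snoc_mul_transpose p q horth, det_mul, det_transpose]
  exact (Int.natAbs_eq_iff_mul_self_eq.1
    (Int.associated_iff_natAbs.1 (associated_det_of_snoc hw.symm hspan))).symm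
end

section
/- Let p₁,…,p_{n−1} ∈ ℤⁿ form a ℤ-basis of V ∩ ℤⁿ for the (n−1)-dimensional subspace V they span over ℝ, and let q ∈ ℤⁿ be a primitive basis vector of V^⊥. Then det [p₁ ⋯ p_{n−1} q] = ±⟨q, q⟩. -/
/-!
The integer vectors orthogonal to `q` are exactly the `ℤ`-combinations of the `pᵢ`: over `ℝ`,
the span of the `pᵢ` is a hyperplane inside `q^⊥`, hence equal to it. Since `q` is primitive,
Bézout gives an integer `x` with `⟨q, x⟩ = 1`, and every integer `y` splits as
`⟨q, y⟩ x + ∑ cᵢ pᵢ`. So the rows `p₁, …, pₙ, x` generate `ℤⁿ⁺¹` and their determinant is `±1`,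
while `q = ⟨q, q⟩ x + ∑ cᵢ pᵢ` shows that replacing `x` by `q` multiplies it by `⟨q, q⟩`.
-/

open Matrix

lemma span_eq_ker_dotProductEquiv {K ι m : Type*} [Field K] [Fintype ι] [Fintype m]
    [DecidableEq m] {v : ι → m → K} (hv : LinearIndependent K v)
    (hcard : Fintype.card ι + 1 = Fintype.card m) {w : m → K} (hw : w ≠ 0)
    (horth : ∀ i, w ⬝ᵥ v i = 0) :
    Submodule.span K (Set.range v) = LinearMap.ker (dotProductEquiv K m w) := by
  have hf : dotProductEquiv K m w ≠ 0 := (LinearEquiv.map_ne_zero_iff _).mpr hw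
  apply Submodule.eq_of_le_of_finrank_le
  · rw [Submodule.span_le]
    rintro _ ⟨i, rfl⟩
    exact horth i
  · have hker := Module.Dual.finrank_ker_add_one_of_ne_zero hf
    rw [Module.finrank_fintype_fun_eq_card] at hker
    rw [finrank_span_eq_card hv]
    omega

lemma exists_eq_smul_add_sum_of_dotProduct_eq_one {ι m : Type*} [Fintype ι] [Fintype m]
    [DecidableEq m] {p : ι → m → ℤ} {q x : m → ℤ}
    (hLI : LinearIndependent ℝ fun i j => (p i j : ℝ))
    (hcard : Fintype.card ι + 1 = Fintype.card m)
    (hbasis : ∀ y : m → ℤ, (fun j => (y j : ℝ)) ∈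
      Submodule.span ℝ (Set.range fun i j => (p i j : ℝ)) → ∃ c : ι → ℤ, y = ∑ i, c i • p i)
    (horth : ∀ i, q ⬝ᵥ p i = 0) (hx : q ⬝ᵥ x = 1) (y : m → ℤ) :
    ∃ c : ι → ℤ, y = (q ⬝ᵥ y) • x + ∑ i, c i • p i := by
  have hcast (u v : m → ℤ) : (Int.cast ∘ u : m → ℝ) ⬝ᵥ Int.cast ∘ v = ((u ⬝ᵥ v : ℤ) : ℝ) :=
    (RingHom.map_dotProduct (Int.castRingHom ℝ) u v).symm
  have hq : (Int.cast ∘ q : m → ℝ) ≠ 0 := by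
    intro h
    have := hcast q x
    rw [h, zero_dotProduct, hx] at this
    norm_num at this
  have hspan := span_eq_ker_dotProductEquiv hLI hcard hq fun i => by
    rw [← Function.comp_def, hcast, horth, Int.cast_zero]
  obtain ⟨c, hc⟩ := hbasis (y - (q ⬝ᵥ y) • x) (by
    rw [hspan, LinearMap.mem_ker, dotProductEquiv_apply_apply, ← Function.comp_def, hcast,
      dotProduct_sub, dotProduct_smul, hx, smul_eq_mul, mul_one, sub_self, Int.cast_zero])
  exact ⟨c, by rw [← hc, add_sub_cancel]⟩

lemma vecMul_of_snoc {R m : Type*} [NonUnitalNonAssocSemiring R] [Fintype m] {n : ℕ}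
    (w : Fin (n + 1) → R) (p : Fin n → m → R) (x : m → R) :
    w ᵥ* of (Fin.snoc p x : Fin (n + 1) → m → R) =
      ∑ i, w i.castSucc • p i + w (Fin.last n) • x := by
  ext j
  simp [vecMul, dotProduct, Fin.sum_univ_castSucc]

lemma det_of_snoc_smul_add_sum {R : Type*} [CommRing R] {n : ℕ}
    (p : Fin n → Fin (n + 1) → R) (x : Fin (n + 1) → R) (a : R) (c : Fin n → R) :
    det (of (Fin.snoc p (a • x + ∑ i, c i • p i))) = a * det (of (Fin.snoc p x)) := by
  have hrow : of (Fin.snoc p (a • x + ∑ i, c i • p i)) = (of (Fin.snoc p x)).updateRow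
      (Fin.last n) (∑ k, (Fin.snoc c a : Fin (n + 1) → R) k • of (Fin.snoc p x) k) := by
    rw [← vecMul_eq_sum, vecMul_of_snoc]
    ext k j
    refine Fin.lastCases ?_ (fun i => ?_) k
    · simp [add_comm]
    · simp
  rw [hrow, det_updateRow_sum]
  simp

/-- for a ℤ-basis `p` of `V ∩ ℤⁿ` and a primitive `q` spanning
`V^⊥`, the determinant of the matrix with columns `p₁,…,pₙ,q` equals `±⟨q,q⟩`. -/
theorem det_cols_eq_pm_q_norm_sq (n : ℕ)
    (p : Fin n → Fin (n + 1) → ℤ) (q : Fin (n + 1) → ℤ)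
    (hLI : LinearIndependent ℝ (fun i => fun j => ((p i j : ℝ))))
    (hbasis : ∀ x : Fin (n + 1) → ℤ,
      ((fun j => (x j : ℝ)) ∈
          Submodule.span ℝ (Set.range (fun i => fun j => ((p i j : ℝ))))) →
        ∃ c : Fin n → ℤ, x = ∑ i, c i • p i)
    (hprim : Finset.univ.gcd q = 1)
    (horth : ∀ i, dotProduct q (p i) = 0) :
    Matrix.det (Matrix.of fun i j =>
        (Fin.snoc p q : Fin (n + 1) → Fin (n + 1) → ℤ) j i) =
        dotProduct q q ∨
    Matrix.det (Matrix.of fun i j =>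
        (Fin.snoc p q : Fin (n + 1) → Fin (n + 1) → ℤ) j i) =
        -dotProduct q q := by
  obtain ⟨x, hx⟩ : ∃ x, q ⬝ᵥ x = 1 := by
    obtain ⟨x, hx⟩ := Finset.univ.gcd_eq_sum_mul q
    exact ⟨x, hprim ▸ hx.symm⟩
  have hdecomp := exists_eq_smul_add_sum_of_dotProduct_eq_one hLI (by simp) hbasis horth hx
  have hunimod : IsUnit (of (Fin.snoc p x)).det := by
    rw [← isUnit_iff_isUnit_det, ← vecMul_surjective_iff_isUnit]
    intro y
    obtain ⟨c, hc⟩ := hdecomp y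
    refine ⟨Fin.snoc c (q ⬝ᵥ y), (vecMul_of_snoc _ _ _).trans ?_⟩
    simp only [Fin.snoc_castSucc, Fin.snoc_last]
    exact (add_comm _ _).trans hc.symm
  obtain ⟨c, hc⟩ := hdecomp q
  have hdet : det (of fun i j => (Fin.snoc p q : Fin (n + 1) → Fin (n + 1) → ℤ) j i) =
      q ⬝ᵥ q * det (of (Fin.snoc p x)) := by
    rw [← det_of_snoc_smul_add_sum p x _ c, ← hc]
    exact det_transpose _
  rcases Int.isUnit_iff.mp hunimod with h | h <;> simp [hdet, h]
end

section
/- Let u₁,…,u_n, v₁,…,v_n be dual bases of ℝⁿ, V = span(p₁,…,p_{n−1}) with orthogonal complement spanned by q ≠ 0, and π(ξ) = (⟨p₁,ξ⟩,…,⟨p_{n−1},ξ⟩). Suppose π(v₁),…,π(v_{n−1}) are linearly independent, and the cone generated by π(v₁),…,π(v_n) contains a nontrivial linear subspace. Then ⟨u_n, q⟩ ≠ 0. -/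
/-!
By duality `q = ∑ⱼ ⟨uⱼ, q⟩ vⱼ`. If `⟨uₙ, q⟩ = 0`, applying `π` (which kills `q`) gives a vanishing
combination of the independent `π(v₁), …, π(vₙ₋₁)`, so every coefficient `⟨uⱼ, q⟩` vanishes and `q = 0`.
-/

open Matrix

theorem sum_dotProduct_smul_eq_of_dual {R ι : Type*} [CommRing R] [Fintype ι] [DecidableEq ι]
    {u v : ι → ι → R} (hdual : ∀ i j, u i ⬝ᵥ v j = if i = j then 1 else 0) (q : ι → R) :
    ∑ j, (u j ⬝ᵥ q) • v j = q := by
  have huv : Matrix.of u * (Matrix.of v)ᵀ = 1 := by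
    ext i j
    exact hdual i j
  calc ∑ j, (u j ⬝ᵥ q) • v j = (Matrix.of v)ᵀ *ᵥ (Matrix.of u *ᵥ q) := by
        rw [mulVec_transpose, vecMul_eq_sum]; rfl
    _ = q := by rw [mulVec_mulVec, mul_eq_one_comm.mp huv, one_mulVec]

theorem Fin.sum_smul_eq_zero_of_last_eq_zero {R M N : Type*} [Ring R] [AddCommGroup M]
    [Module R M] [AddCommGroup N] [Module R N] {n : ℕ} {v : Fin (n + 1) → M} (f : M →ₗ[R] N)
    (hf : LinearIndependent R (fun i : Fin n => f (v i.castSucc))) {c : Fin (n + 1) → R}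
    (hlast : c (Fin.last n) = 0) (hfc : f (∑ j, c j • v j) = 0) :
    ∑ j, c j • v j = 0 := by
  rw [Fin.sum_univ_castSucc, hlast, zero_smul, add_zero] at hfc ⊢
  simp only [map_sum, map_smul] at hfc
  simp [Fintype.linearIndependent_iff.mp hf _ hfc]

theorem pairing_last_ne_zero_of_cone_subspace_general (n : ℕ)
    (u v : Fin (n + 1) → Fin (n + 1) → ℝ)
    (hdual : ∀ i j, dotProduct (u i) (v j) = if i = j then 1 else 0)
    (p : Fin n → Fin (n + 1) → ℝ)
    (q : Fin (n + 1) → ℝ) (hq : q ≠ 0)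
    (horth : ∀ l, dotProduct (p l) q = 0)
    (hLI : LinearIndependent ℝ
      (fun i : Fin n => fun l => dotProduct (p l) (v i.castSucc))) :
    dotProduct (u (Fin.last n)) q ≠ 0 := by
  intro hlast
  apply hq
  rw [← sum_dotProduct_smul_eq_of_dual hdual q] at horth ⊢
  exact Fin.sum_smul_eq_zero_of_last_eq_zero (Matrix.of p).mulVecLin hLI hlast (funext horth)

/-- with dual bases `u, v`, `V = span(p)` with orthogonal
complement spanned by `q ≠ 0`, and `π(ξ) = (⟨pₗ,ξ⟩)ₗ`, if `π(v₁),…,π(vₙ)` are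
linearly independent and the cone generated by all `π(vⱼ)` contains a
nontrivial subspace, then `⟨uₙ₊₁, q⟩ ≠ 0`. -/
theorem pairing_last_ne_zero_of_cone_subspace (n : ℕ)
    (u v : Fin (n + 1) → Fin (n + 1) → ℝ)
    (hdual : ∀ i j, dotProduct (u i) (v j) = if i = j then 1 else 0)
    (p : Fin n → Fin (n + 1) → ℝ)
    (hp : LinearIndependent ℝ p)
    (q : Fin (n + 1) → ℝ) (hq : q ≠ 0)
    (horth : ∀ l, dotProduct (p l) q = 0)
    (hLI : LinearIndependent ℝ
      (fun i : Fin n => fun l => dotProduct (p l) (v i.castSucc)))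
    (x : Fin n → ℝ) (hx : x ≠ 0)
    (hxc : ∃ a : Fin (n + 1) → ℝ, (∀ i, 0 ≤ a i) ∧
      x = ∑ j, a j • (fun l => dotProduct (p l) (v j)))
    (hnxc : ∃ b : Fin (n + 1) → ℝ, (∀ i, 0 ≤ b i) ∧
      -x = ∑ j, b j • (fun l => dotProduct (p l) (v j))) :
    dotProduct (u (Fin.last n)) q ≠ 0 :=
  pairing_last_ne_zero_of_cone_subspace_general n u v hdual p q hq horth hLI
end

section
/- Let u₁,…,u_n, v₁,…,v_n be dual bases of ℝⁿ, V = span(p₁,…,p_{n−1}) with orthogonal complement spanned by q ≠ 0, and π(ξ) = (⟨p₁,ξ⟩,…,⟨p_{n−1},ξ⟩). Suppose π(v₁),…,π(v_{n−1}) are linearly independent and the cone generated by π(v₁),…,π(v_n) contains a nontrivial linear subspace. Then either ⟨u_i, q⟩ ≥ 0 for all i ∈ {1,…,n} or ⟨u_i, q⟩ ≤ 0 for all i ∈ {1,…,n}. -/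
/-!
Write `c j = ⟨u j, q⟩`, so that `q = ∑ c j v j` by duality, and `π q = 0` makes `c` a linear
relation among the `π(v j)`. A nontrivial subspace `±x` of the cone gives a second, nonnegative,
nonzero relation `s = a + b`. Since `π(v₁), …, π(v_{n-1})` are independent, the relations form a
line, so `c` is a scalar multiple of `s` and has constant sign.
-/

open Matrix

section Relations

variable {K M : Type*} [Field K] [AddCommGroup M] [Module K M] {n : ℕ} {w : Fin (n + 1) → M}

theorem LinearIndependent.eq_zero_of_sum_smul_eq_zero_of_last_eq_zero
    (hw : LinearIndependent K (w ∘ Fin.castSucc)) {c : Fin (n + 1) → K}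
    (hc : ∑ j, c j • w j = 0) (hlast : c (Fin.last n) = 0) : c = 0 := by
  rw [Fin.sum_univ_castSucc, hlast, zero_smul, add_zero] at hc
  funext j
  induction j using Fin.lastCases with
  | last => exact hlast
  | cast j => exact Fintype.linearIndependent_iff.mp hw (c ∘ Fin.castSucc) hc j

theorem LinearIndependent.last_smul_eq_last_smul_of_sum_smul_eq_zero
    (hw : LinearIndependent K (w ∘ Fin.castSucc)) {c s : Fin (n + 1) → K}
    (hc : ∑ j, c j • w j = 0) (hs : ∑ j, s j • w j = 0) :
    c (Fin.last n) • s = s (Fin.last n) • c := by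
  refine sub_eq_zero.mp (hw.eq_zero_of_sum_smul_eq_zero_of_last_eq_zero ?_ ?_)
  · simp only [Pi.sub_apply, Pi.smul_apply, smul_eq_mul, sub_smul, mul_smul,
      Finset.sum_sub_distrib, ← Finset.smul_sum, hc, hs, smul_zero, sub_zero]
  · simp only [Pi.sub_apply, Pi.smul_apply, smul_eq_mul, mul_comm, sub_self]

theorem LinearIndependent.nonneg_or_nonpos_of_sum_smul_eq_zero [LinearOrder K]
    [IsStrictOrderedRing K] (hw : LinearIndependent K (w ∘ Fin.castSucc))
    {c s : Fin (n + 1) → K} (hc : ∑ j, c j • w j = 0) (hc0 : c ≠ 0)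
    (hs : ∑ j, s j • w j = 0) (hs_nonneg : ∀ j, 0 ≤ s j) (hs0 : s ≠ 0) :
    (∀ j, 0 ≤ c j) ∨ (∀ j, c j ≤ 0) := by
  have hprop := hw.last_smul_eq_last_smul_of_sum_smul_eq_zero hc hs
  have hc_last : c (Fin.last n) ≠ 0 := fun h =>
    hc0 (hw.eq_zero_of_sum_smul_eq_zero_of_last_eq_zero hc h)
  have hs_last : s (Fin.last n) ≠ 0 := by
    intro h
    rw [h, zero_smul, smul_eq_zero] at hprop
    exact hprop.elim hc_last hs0
  have hc_eq : c = (c (Fin.last n) / s (Fin.last n)) • s := by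
    rw [div_eq_inv_mul, mul_smul, hprop, inv_smul_smul₀ hs_last]
  rcases le_total 0 (c (Fin.last n) / s (Fin.last n)) with h | h
  · exact .inl fun j => hc_eq ▸ mul_nonneg h (hs_nonneg j)
  · exact .inr fun j => hc_eq ▸ mul_nonpos_of_nonpos_of_nonneg h (hs_nonneg j)

end Relations

theorem sum_dotProduct_smul_eq_of_dotProduct_eq_ite {K ι : Type*} [Field K] [Fintype ι]
    [DecidableEq ι] {u v : ι → ι → K} (hdual : ∀ i j, u i ⬝ᵥ v j = if i = j then 1 else 0)
    (q : ι → K) : ∑ j, (u j ⬝ᵥ q) • v j = q := by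
  have huv : of u * (of v)ᵀ = 1 := by
    ext i j
    simpa [mul_apply, one_apply, dotProduct] using hdual i j
  have hvu : (of v)ᵀ * of u = 1 := mul_eq_one_comm.mp huv
  calc ∑ j, (u j ⬝ᵥ q) • v j = (of v)ᵀ *ᵥ (of u *ᵥ q) := by
        rw [mulVec_transpose, vecMul_eq_sum]; rfl
    _ = q := by rw [mulVec_mulVec, hvu, one_mulVec]

theorem dotProduct_sum_smul {K ι κ μ : Type*} [CommRing K] [Fintype ι] [Fintype κ]
    (p : μ → ι → K) (c : κ → K) (v : κ → ι → K) :
    (fun l => p l ⬝ᵥ ∑ j, c j • v j) = ∑ j, c j • fun l => p l ⬝ᵥ v j := by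
  funext l
  simp only [dotProduct_sum, dotProduct_smul, Finset.sum_apply, Pi.smul_apply]

theorem pairing_same_sign_of_cone_subspace_general (n : ℕ)
    (u v : Fin (n + 1) → Fin (n + 1) → ℝ)
    (hdual : ∀ i j, dotProduct (u i) (v j) = if i = j then 1 else 0)
    (p : Fin n → Fin (n + 1) → ℝ)
    (q : Fin (n + 1) → ℝ) (hq : q ≠ 0)
    (horth : ∀ l, dotProduct (p l) q = 0)
    (hLI : LinearIndependent ℝ
      (fun i : Fin n => fun l => dotProduct (p l) (v i.castSucc)))
    (x : Fin n → ℝ) (hx : x ≠ 0)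
    (hxc : ∃ a : Fin (n + 1) → ℝ, (∀ i, 0 ≤ a i) ∧
      x = ∑ j, a j • (fun l => dotProduct (p l) (v j)))
    (hnxc : ∃ b : Fin (n + 1) → ℝ, (∀ i, 0 ≤ b i) ∧
      -x = ∑ j, b j • (fun l => dotProduct (p l) (v j))) :
    (∀ i, 0 ≤ dotProduct (u i) q) ∨
      (∀ i, dotProduct (u i) q ≤ 0) := by
  obtain ⟨a, ha, hxa⟩ := hxc
  obtain ⟨b, hb, hxb⟩ := hnxc
  have hq_eq := sum_dotProduct_smul_eq_of_dotProduct_eq_ite hdual q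
  have hc : ∑ j, (u j ⬝ᵥ q) • (fun l => p l ⬝ᵥ v j) = 0 := by
    rw [← dotProduct_sum_smul, hq_eq]
    exact funext horth
  have hc0 : (fun j => u j ⬝ᵥ q) ≠ 0 := fun h => hq <| by
    rw [← hq_eq]
    simp only [show ∀ j, u j ⬝ᵥ q = 0 from congrFun h, zero_smul, Finset.sum_const_zero]
  have hs : ∑ j, (a + b) j • (fun l => p l ⬝ᵥ v j) = 0 := by
    simp only [Pi.add_apply, add_smul, Finset.sum_add_distrib, ← hxa, ← hxb, add_neg_cancel]
  have hs0 : a + b ≠ 0 := fun h => hx <| by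
    have ha0 : a = 0 := funext fun j =>
      ((add_eq_zero_iff_of_nonneg (ha j) (hb j)).mp (congrFun h j)).1
    simp only [hxa, ha0, Pi.zero_apply, zero_smul, Finset.sum_const_zero]
  exact hLI.nonneg_or_nonpos_of_sum_smul_eq_zero (w := fun j l => p l ⬝ᵥ v j)
    (c := fun j => u j ⬝ᵥ q) hc hc0 hs (fun j => add_nonneg (ha j) (hb j)) hs0

/-- in the setting of Statement 10, the pairings `⟨uᵢ,q⟩` all
have the same sign. -/
theorem pairing_same_sign_of_cone_subspace (n : ℕ)
    (u v : Fin (n + 1) → Fin (n + 1) → ℝ)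
    (hdual : ∀ i j, dotProduct (u i) (v j) = if i = j then 1 else 0)
    (p : Fin n → Fin (n + 1) → ℝ)
    (hp : LinearIndependent ℝ p)
    (q : Fin (n + 1) → ℝ) (hq : q ≠ 0)
    (horth : ∀ l, dotProduct (p l) q = 0)
    (hLI : LinearIndependent ℝ
      (fun i : Fin n => fun l => dotProduct (p l) (v i.castSucc)))
    (x : Fin n → ℝ) (hx : x ≠ 0)
    (hxc : ∃ a : Fin (n + 1) → ℝ, (∀ i, 0 ≤ a i) ∧
      x = ∑ j, a j • (fun l => dotProduct (p l) (v j)))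
    (hnxc : ∃ b : Fin (n + 1) → ℝ, (∀ i, 0 ≤ b i) ∧
      -x = ∑ j, b j • (fun l => dotProduct (p l) (v j))) :
    (∀ i, 0 ≤ dotProduct (u i) q) ∨
      (∀ i, dotProduct (u i) q ≤ 0) :=
  pairing_same_sign_of_cone_subspace_general n u v hdual p q hq horth hLI x hx hxc hnxc
end

section
/- Let u₁,…,u_n, v₁,…,v_n be dual bases of ℝⁿ, q ≠ 0 orthogonal to span(p₁,…,p_{n−1}), and π(ξ) = (⟨p₁,ξ⟩,…,⟨p_{n−1},ξ⟩). Suppose π(v₁),…,π(v_{n−1}) are linearly independent, all π(v_j) are nonzero, and π(v_n) lies in the cone generated by π(v₁),…,π(v_{n−1}), say π(v_n) = Σ_{j=1}^{n−1} S_j π(v_j) with S_j ≥ 0. Then ⟨u_n, q⟩ ≠ 0, ⟨u_j, q⟩ = −S_j ⟨u_n, q⟩ for j = 1,…,n−1, and consequently the coefficients ⟨u₁,q⟩,…,⟨u_{n−1},q⟩ all have sign opposite to (or zero relative to) ⟨u_n,q⟩. -/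
open Matrix BigOperators

/-!
Expanding `q = ∑ⱼ ⟨uⱼ, q⟩ vⱼ` in the dual basis and projecting, orthogonality of `q` to the `pₗ`
gives the linear relation `∑ⱼ ⟨uⱼ, q⟩ π(vⱼ) = 0`. Substituting the cone relation for `π(vₙ)` and
using the linear independence of the remaining `π(vⱼ)` yields `⟨uⱼ, q⟩ = -Sⱼ ⟨uₙ, q⟩`. If
`⟨uₙ, q⟩` vanished, every coefficient of `q` would vanish, so `q = 0`.
-/

theorem Matrix.eq_sum_dotProduct_smul_of_dotProduct_eq_ite {ι R : Type*} [Fintype ι]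
    [DecidableEq ι] [CommRing R] {u v : ι → ι → R}
    (hdual : ∀ i j, u i ⬝ᵥ v j = if i = j then 1 else 0) (q : ι → R) :
    q = ∑ j, (u j ⬝ᵥ q) • v j := by
  have hUV : of u * (of v)ᵀ = 1 := by
    ext i j
    simpa [mul_apply, one_apply, dotProduct] using hdual i j
  calc q = ((of v)ᵀ * of u) *ᵥ q := by rw [mul_eq_one_comm.mp hUV, one_mulVec]
    _ = ∑ j, (u j ⬝ᵥ q) • v j := by
      ext k
      rw [← mulVec_mulVec]
      simp [mulVec, dotProduct, Finset.sum_apply, mul_comm]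

theorem LinearIndependent.eq_neg_mul_last_of_sum_smul_eq_zero {R M : Type*} [CommRing R]
    [AddCommGroup M] [Module R M] {n : ℕ} {w : Fin (n + 1) → M}
    (hw : LinearIndependent R fun i : Fin n => w i.castSucc) {S : Fin n → R}
    (hlast : w (Fin.last n) = ∑ j, S j • w j.castSucc) {a : Fin (n + 1) → R}
    (hsum : ∑ j, a j • w j = 0) (j : Fin n) :
    a j.castSucc = -S j * a (Fin.last n) := by
  have hcomb : ∑ i : Fin n, (a i.castSucc + S i * a (Fin.last n)) • w i.castSucc = 0 := by
    rw [← hsum, Fin.sum_univ_castSucc, hlast, Finset.smul_sum, ← Finset.sum_add_distrib]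
    refine Finset.sum_congr rfl fun i _ => ?_
    rw [smul_smul, add_smul, mul_comm]
  have hcoeff := Fintype.linearIndependent_iff.mp hw _ hcomb j
  linear_combination hcoeff

theorem pairing_relations_at_good_vertex_general (n : ℕ)
    (u v : Fin (n + 1) → Fin (n + 1) → ℝ)
    (hdual : ∀ i j, dotProduct (u i) (v j) = if i = j then 1 else 0)
    (p : Fin n → Fin (n + 1) → ℝ)
    (q : Fin (n + 1) → ℝ) (hq : q ≠ 0)
    (horth : ∀ l, dotProduct (p l) q = 0)
    (hLI : LinearIndependent ℝ
      (fun i : Fin n => fun l => dotProduct (p l) (v i.castSucc)))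
    (S : Fin n → ℝ) (hS : ∀ j, 0 ≤ S j)
    (hcone : (fun l => dotProduct (p l) (v (Fin.last n))) =
      ∑ j : Fin n, S j • (fun l => dotProduct (p l) (v j.castSucc))) :
    dotProduct (u (Fin.last n)) q ≠ 0 ∧
      (∀ j : Fin n, dotProduct (u j.castSucc) q =
        -S j * dotProduct (u (Fin.last n)) q) ∧
      ∀ j : Fin n, dotProduct (u j.castSucc) q *
        dotProduct (u (Fin.last n)) q ≤ 0 := by
  have hexp := eq_sum_dotProduct_smul_of_dotProduct_eq_ite hdual q
  have hproj : ∑ j, (u j ⬝ᵥ q) • (of p *ᵥ v j) = 0 := by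
    simp_rw [← mulVec_smul, ← mulVec_sum, ← hexp]
    exact funext horth
  have hrel := hLI.eq_neg_mul_last_of_sum_smul_eq_zero hcone hproj
  have hlast : u (Fin.last n) ⬝ᵥ q ≠ 0 := by
    intro h0
    refine hq (hexp.trans (Finset.sum_eq_zero fun j _ => ?_))
    induction j using Fin.lastCases with
    | last => simp [h0]
    | cast i => simp [hrel i, h0]
  refine ⟨hlast, hrel, fun j => ?_⟩
  rw [hrel j, mul_assoc, neg_mul]
  exact neg_nonpos.mpr (mul_nonneg (hS j) (mul_self_nonneg _))

/-- with dual bases `u, v`, `q ≠ 0` orthogonal to the `p l`,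
`π(v₁),…,π(vₙ)` linearly independent, all `π(vⱼ)` nonzero, and
`π(vₙ₊₁) = ∑ⱼ Sⱼ π(vⱼ)` with `Sⱼ ≥ 0`, one has `⟨uₙ₊₁,q⟩ ≠ 0`,
`⟨uⱼ,q⟩ = -Sⱼ⟨uₙ₊₁,q⟩`, and opposite signs. -/
theorem pairing_relations_at_good_vertex (n : ℕ)
    (u v : Fin (n + 1) → Fin (n + 1) → ℝ)
    (hdual : ∀ i j, dotProduct (u i) (v j) = if i = j then 1 else 0)
    (p : Fin n → Fin (n + 1) → ℝ)
    (q : Fin (n + 1) → ℝ) (hq : q ≠ 0)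
    (horth : ∀ l, dotProduct (p l) q = 0)
    (hLI : LinearIndependent ℝ
      (fun i : Fin n => fun l => dotProduct (p l) (v i.castSucc)))
    (hne : ∀ j : Fin (n + 1),
      (fun l => dotProduct (p l) (v j)) ≠ (0 : Fin n → ℝ))
    (S : Fin n → ℝ) (hS : ∀ j, 0 ≤ S j)
    (hcone : (fun l => dotProduct (p l) (v (Fin.last n))) =
      ∑ j : Fin n, S j • (fun l => dotProduct (p l) (v j.castSucc))) :
    dotProduct (u (Fin.last n)) q ≠ 0 ∧
      (∀ j : Fin n, dotProduct (u j.castSucc) q =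
        -S j * dotProduct (u (Fin.last n)) q) ∧
      ∀ j : Fin n, dotProduct (u j.castSucc) q *
        dotProduct (u (Fin.last n)) q ≤ 0 :=
  pairing_relations_at_good_vertex_general n u v hdual p q hq horth hLI S hS hcone
end

section
/- Let p₁,…,p_{n−1}, q ∈ ℝⁿ with q ⊥ p_l for all l, let u₁,…,u_n, v₁,…,v_n be dual bases of ℝⁿ with det[v₁ ⋯ v_n] = ±1, and π(ξ) = (⟨p₁,ξ⟩,…,⟨p_{n−1},ξ⟩). Assume ⟨u_n, q⟩ = −1. Then det [p₁ ⋯ p_{n−1} q] = ±⟨q,q⟩ · det [π(v₁) ⋯ π(v_{n−1})], where the last determinant is of the (n−1)×(n−1) matrix with columns π(v_j) ∈ ℝ^{n−1}. -/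
open Matrix BigOperators

/-! Let `B` have rows `p₁, …, pₙ, q` and `V` columns `v₁, …, vₙ₊₁`, so `(B V)ₗⱼ = ⟨bₗ, vⱼ⟩`.
Duality gives `q = ∑ᵢ ⟨uᵢ, q⟩ vᵢ`, hence the vector `c = (⟨uᵢ, q⟩)ᵢ` satisfies
`(B V) c = B q = ⟨q, q⟩ eₙ₊₁` by orthogonality. Multiplying by the adjugate of `B V` yields
`det (B V) · cₙ₊₁ = ⟨q, q⟩ · det (leading n × n minor of B V)`; that minor is `[⟨pₗ, vⱼ⟩]`,
while `cₙ₊₁ = -1` and `det V = ±1`. -/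

theorem dotProduct_eq_sum_mul_of_dual {R ι : Type*} [CommRing R] [Fintype ι] [DecidableEq ι]
    {u v : ι → ι → R} (hdual : ∀ i j, u i ⬝ᵥ v j = if i = j then 1 else 0) (a x : ι → R) :
    a ⬝ᵥ x = ∑ i, (a ⬝ᵥ v i) * (u i ⬝ᵥ x) := by
  have hUV : of u * (of v)ᵀ = 1 := by
    ext i j
    simpa [mul_apply, one_apply, dotProduct] using hdual i j
  calc a ⬝ᵥ x = a ⬝ᵥ (((of v)ᵀ * of u) *ᵥ x) := by rw [mul_eq_one_comm.mp hUV, one_mulVec]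
    _ = (a ᵥ* (of v)ᵀ) ⬝ᵥ (of u *ᵥ x) := by rw [← mulVec_mulVec, dotProduct_mulVec]
    _ = ∑ i, (a ⬝ᵥ v i) * (u i ⬝ᵥ x) := by
      simp only [dotProduct, vecMul, mulVec, transpose_apply, of_apply]

theorem det_mul_apply_of_mulVec_eq_single {R : Type*} [CommRing R] {n : ℕ}
    (M : Matrix (Fin (n + 1)) (Fin (n + 1)) R) {c : Fin (n + 1) → R} {i : Fin (n + 1)} {a : R}
    (h : M *ᵥ c = Pi.single i a) :
    M.det * c i = a * (M.submatrix i.succAbove i.succAbove).det := by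
  have := congrFun (congrArg (adjugate M *ᵥ ·) h) i
  simp only [mulVec_mulVec, adjugate_mul, smul_mulVec, one_mulVec, Pi.smul_apply, smul_eq_mul,
    mulVec_single, op_smul_eq_mul, col_apply, adjugate_fin_succ_eq_det_submatrix] at this
  rw [this, ← two_mul, pow_mul, neg_one_sq, one_pow, one_mul, mul_comm]

/-- real determinant identity. With `q ⊥ pₗ`, dual bases `u, v`
with `det [v₁ ⋯ vₙ₊₁] = ±1`, and `⟨uₙ₊₁, q⟩ = -1`, one has
`det [p₁ ⋯ pₙ q] = ±⟨q,q⟩ · det [π(v₁) ⋯ π(vₙ)]`. -/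
theorem det_cols_eq_pm_qq_mul_det_proj (n : ℕ)
    (p : Fin n → Fin (n + 1) → ℝ) (q : Fin (n + 1) → ℝ)
    (horth : ∀ l, dotProduct (p l) q = 0)
    (u v : Fin (n + 1) → Fin (n + 1) → ℝ)
    (hdual : ∀ i j, dotProduct (u i) (v j) = if i = j then 1 else 0)
    (hdetv : Matrix.det (Matrix.of fun i j => v j i) = 1 ∨
      Matrix.det (Matrix.of fun i j => v j i) = -1)
    (huq : dotProduct (u (Fin.last n)) q = -1) :
    Matrix.det (Matrix.of fun i j =>
        (Fin.snoc p q : Fin (n + 1) → Fin (n + 1) → ℝ) j i) =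
      dotProduct q q *
        Matrix.det (Matrix.of fun l (j : Fin n) =>
          dotProduct (p l) (v j.castSucc)) ∨
    Matrix.det (Matrix.of fun i j =>
        (Fin.snoc p q : Fin (n + 1) → Fin (n + 1) → ℝ) j i) =
      -(dotProduct q q *
        Matrix.det (Matrix.of fun l (j : Fin n) =>
          dotProduct (p l) (v j.castSucc))) := by
  set B : Matrix (Fin (n + 1)) (Fin (n + 1)) ℝ := of (Fin.snoc p q)
  set V : Matrix (Fin (n + 1)) (Fin (n + 1)) ℝ := of fun i j => v j i
  have hBV : ∀ l j, (B * V) l j = (Fin.snoc p q : Fin (n + 1) → Fin (n + 1) → ℝ) l ⬝ᵥ v j :=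
    fun _ _ => rfl
  have hcoeff : (B * V) *ᵥ (fun i => u i ⬝ᵥ q) = Pi.single (Fin.last n) (q ⬝ᵥ q) := by
    ext l
    rw [mulVec, dotProduct]
    simp only [hBV, ← dotProduct_eq_sum_mul_of_dual hdual]
    induction l using Fin.lastCases with
    | last => simp
    | cast l => simp [horth, Fin.castSucc_ne_last]
  have hminor : (B * V).submatrix Fin.castSucc Fin.castSucc =
      of fun l (j : Fin n) => p l ⬝ᵥ v j.castSucc := by
    ext l j
    simp [hBV]
  have hdet := det_mul_apply_of_mulVec_eq_single (B * V) hcoeff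
  rw [Fin.succAbove_last, hminor, huq, det_mul] at hdet
  change Bᵀ.det = _ ∨ Bᵀ.det = _
  rw [det_transpose]
  rcases hdetv with hV | hV
  · right
    rw [hV] at hdet
    linarith
  · left
    rw [hV] at hdet
    linarith
end

section
/- Let p₁,…,p_{n−1} ∈ ℤⁿ be a ℤ-basis of V ∩ ℤⁿ (V their real span, (n−1)-dimensional), q ∈ ℤⁿ primitive with q ⊥ V, u₁,…,u_n, v₁,…,v_n dual ℤ-bases of ℤⁿ, and π(ξ) = (⟨p₁,ξ⟩,…,⟨p_{n−1},ξ⟩). If ⟨u_n, q⟩ = −1, then det [π(v₁) ⋯ π(v_{n−1})] = ±1; that is, π(v₁),…,π(v_{n−1}) form a ℤ-basis of ℤ^{n−1}. -/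
/-!
Write `π ξ = (⟨p_l, ξ⟩)_l`, so that the matrix in question has columns `π (v_j)`, `j < n`.
By Bézout there is `w` with `⟨q, w⟩ = 1`; since the integer vectors orthogonal to `q` are
exactly the integer combinations of the `p_l`, the rows `w, p_1, …, p_n` form a unimodular
matrix, hence `π : ℤ^{n+1} → ℤ^n` is onto. Expanding `q` in the basis `v` gives
`q = ∑ ⟨u_k, q⟩ v_k` with last coefficient `-1`, so the `v_j` (`j < n`) together with `q`
span `ℤ^{n+1}`. As `π q = 0`, the `π (v_j)` span `ℤ^n`, and a square integer matrix whose
columns span `ℤ^n` is unimodular.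
-/

open Matrix

namespace Matrix

theorem mem_span_of_dotProduct_eq_zero {K ι κ : Type*} [Field K] [Fintype ι] [Fintype κ]
    (hcard : Fintype.card ι = Fintype.card κ + 1) {p : κ → ι → K}
    (hp : LinearIndependent K p) {q : ι → K} (hq : q ≠ 0) (horth : ∀ l, p l ⬝ᵥ q = 0)
    {x : ι → K} (hx : q ⬝ᵥ x = 0) :
    x ∈ Submodule.span K (Set.range p) := by
  classical
  let f : Module.Dual K (ι → K) := dotProductBilin K K q
  have hf : f ≠ 0 := by
    obtain ⟨j, hj⟩ := Function.ne_iff.mp hq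
    exact fun h => hj (by simpa [f] using LinearMap.congr_fun h (Pi.single j 1))
  have hle : Submodule.span K (Set.range p) ≤ LinearMap.ker f := by
    rw [Submodule.span_le]
    rintro _ ⟨l, rfl⟩
    simpa [f, dotProduct_comm] using horth l
  have hker := Module.Dual.finrank_ker_add_one_of_ne_zero hf
  rw [Module.finrank_fintype_fun_eq_card, hcard] at hker
  have heq := Submodule.eq_of_le_of_finrank_le hle (by rw [finrank_span_eq_card hp]; omega)
  exact heq ▸ hx

theorem isUnit_of_vecCons_of_dotProduct_eq_one {R : Type*} [CommRing R] {n : ℕ}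
    {p : Fin n → Fin (n + 1) → R} {q w : Fin (n + 1) → R}
    (hker : ∀ x, q ⬝ᵥ x = 0 → ∃ c : Fin n → R, x = ∑ i, c i • p i) (hqw : q ⬝ᵥ w = 1) :
    IsUnit (of (vecCons w p)) := by
  refine vecMul_surjective_iff_isUnit.mp fun y => ?_
  obtain ⟨c, hc⟩ := hker (y - (q ⬝ᵥ y) • w) (by simp [dotProduct_sub, hqw])
  refine ⟨vecCons (q ⬝ᵥ y) c, ?_⟩
  dsimp only
  rw [vecMul_eq_sum, Fin.sum_univ_succ]
  change (q ⬝ᵥ y) • w + ∑ i, c i • p i = y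
  rw [← hc, add_sub_cancel]

theorem mulVec_surjective_of_isUnit_vecCons {R : Type*} [CommRing R] {n : ℕ}
    {p : Fin n → Fin (n + 1) → R} {w : Fin (n + 1) → R} (h : IsUnit (of (vecCons w p))) :
    Function.Surjective (of p).mulVec := by
  intro t
  obtain ⟨ξ, hξ⟩ := mulVec_surjective_iff_isUnit.mpr h (vecCons 0 t)
  exact ⟨ξ, funext fun l => by simpa [mulVec] using congrFun hξ l.succ⟩

section Dual

variable {R ι : Type*} [CommRing R] [Fintype ι] [DecidableEq ι] {u v : ι → ι → R}

theorem eq_sum_dotProduct_smul_of_dual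
    (hdual : ∀ i j, u i ⬝ᵥ v j = if i = j then 1 else 0) (x : ι → R) :
    x = ∑ k, (u k ⬝ᵥ x) • v k := by
  have hVU : (of v)ᵀ * of u = 1 :=
    mul_eq_one_comm.mp (by ext i j; simpa [mul_apply, one_apply, dotProduct] using hdual i j)
  calc x = ((of v)ᵀ * of u) *ᵥ x := by rw [hVU, one_mulVec]
    _ = ∑ k, (u k ⬝ᵥ x) • v k := by
      rw [← mulVec_mulVec, mulVec_transpose, vecMul_eq_sum]; rfl

theorem span_eq_top_of_dual (hdual : ∀ i j, u i ⬝ᵥ v j = if i = j then 1 else 0) :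
    Submodule.span R (Set.range v) = ⊤ :=
  Submodule.eq_top_iff'.mpr fun x => eq_sum_dotProduct_smul_of_dual hdual x ▸
    Submodule.sum_mem _ fun k _ => Submodule.smul_mem _ _ (Submodule.subset_span ⟨k, rfl⟩)

end Dual

end Matrix

namespace Submodule

theorem span_map_castSucc_eq_top {R M N : Type*} [Ring R] [AddCommGroup M] [Module R M]
    [AddCommGroup N] [Module R N] {n : ℕ} {π : M →ₗ[R] N} (hπ : Function.Surjective π)
    {v : Fin (n + 1) → M} (hv : span R (Set.range v) = ⊤) {q : M} (hq : π q = 0)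
    {c : Fin (n + 1) → R} (hqv : q = ∑ k, c k • v k) (hc : IsUnit (c (Fin.last n))) :
    span R (Set.range fun j : Fin n => π (v j.castSucc)) = ⊤ := by
  let S := span R (Set.range fun j : Fin n => v j.castSucc)
  have hS : S ⊔ R ∙ q = ⊤ := by
    rw [eq_top_iff, ← hv, span_le]
    rintro _ ⟨k, rfl⟩
    induction k using Fin.lastCases with
    | last =>
      have hlast : c (Fin.last n) • v (Fin.last n)
          = q - ∑ j : Fin n, c j.castSucc • v j.castSucc := by
        rw [hqv, Fin.sum_univ_castSucc]; abel
      rw [SetLike.mem_coe, ← smul_mem_iff_of_isUnit _ hc, hlast]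
      exact sub_mem (mem_sup_right (mem_span_singleton_self q))
        (mem_sup_left (sum_mem fun j _ => smul_mem _ _ (subset_span ⟨j, rfl⟩)))
    | cast j => exact mem_sup_left (subset_span ⟨j, rfl⟩)
  calc span R (Set.range fun j : Fin n => π (v j.castSucc))
      = (S ⊔ R ∙ q).map π := by
        rw [map_sup, map_span π {q}, Set.image_singleton, hq, span_singleton_eq_bot.mpr rfl,
          sup_bot_eq, map_span, ← Set.range_comp]; rfl
    _ = ⊤ := by rw [hS, map_top, LinearMap.range_eq_top.mpr hπ]

end Submodule

/-- if `p` is a ℤ-basis of `V ∩ ℤ^(n+1)`, `q` primitive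
orthogonal to `V`, `u, v` dual ℤ-bases of `ℤ^(n+1)`, and `⟨uₙ₊₁,q⟩ = -1`, then
`det [π(v₁) ⋯ π(vₙ)] = ±1`, i.e. the `π(vⱼ)` form a ℤ-basis of `ℤⁿ`. -/
theorem det_proj_eq_pm_one (n : ℕ)
    (p : Fin n → Fin (n + 1) → ℤ) (q : Fin (n + 1) → ℤ)
    (hLI : LinearIndependent ℝ (fun i => fun j => ((p i j : ℝ))))
    (hpbasis : ∀ x : Fin (n + 1) → ℤ,
      ((fun j => (x j : ℝ)) ∈
          Submodule.span ℝ (Set.range (fun i => fun j => ((p i j : ℝ))))) →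
        ∃ c : Fin n → ℤ, x = ∑ i, c i • p i)
    (hprim : Finset.univ.gcd q = 1)
    (horth : ∀ l, dotProduct (p l) q = 0)
    (u v : Fin (n + 1) → Fin (n + 1) → ℤ)
    (hdual : ∀ i j, dotProduct (u i) (v j) = if i = j then 1 else 0)
    (huq : dotProduct (u (Fin.last n)) q = -1) :
    Matrix.det (Matrix.of fun l (j : Fin n) =>
        dotProduct (p l) (v j.castSucc)) = 1 ∨
    Matrix.det (Matrix.of fun l (j : Fin n) =>
        dotProduct (p l) (v j.castSucc)) = -1 := by
  have cast_dotProduct (a b : Fin (n + 1) → ℤ) :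
      ((a ⬝ᵥ b : ℤ) : ℝ) = (fun j => (a j : ℝ)) ⬝ᵥ fun j => (b j : ℝ) := by
    simp [dotProduct]
  have hq : (fun j => (q j : ℝ)) ≠ 0 := fun h => by
    have : Finset.univ.gcd q = 0 :=
      Finset.gcd_eq_zero_iff.mpr fun j _ => by simpa using congrFun h j
    simp [this] at hprim
  have hker (x : Fin (n + 1) → ℤ) (hx : q ⬝ᵥ x = 0) : ∃ c : Fin n → ℤ, x = ∑ i, c i • p i :=
    hpbasis x <| mem_span_of_dotProduct_eq_zero (by simp) hLI hq
      (fun l => by rw [← cast_dotProduct, horth, Int.cast_zero])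
      (by rw [← cast_dotProduct, hx, Int.cast_zero])
  obtain ⟨w, hw⟩ := Finset.univ.gcd_eq_sum_mul q
  have hπ : Function.Surjective (of p).mulVecLin :=
    mulVec_surjective_of_isUnit_vecCons
      (isUnit_of_vecCons_of_dotProduct_eq_one hker (hprim ▸ hw.symm))
  have hcols := Submodule.span_map_castSucc_eq_top hπ (span_eq_top_of_dual hdual)
    (funext horth) (eq_sum_dotProduct_smul_of_dual hdual q) (huq ▸ isUnit_one.neg)
  have hN : IsUnit (of fun l (j : Fin n) => p l ⬝ᵥ v j.castSucc) := by
    rw [← mulVec_surjective_iff_isUnit, ← coe_mulVecLin, ← LinearMap.range_eq_top,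
      range_mulVecLin]
    exact hcols
  exact Int.isUnit_iff.mp ((isUnit_iff_isUnit_det _).mp hN)
end
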